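/- arXiv:1212.3822 — 2 statements merged into one kernel-verified Lean document; each statement's English description precedes it below -/
import Mathlib

section
/- For every real t > 2 there exists exactly one real x with ψ(x) = t, and this x is positive. (In particular, for every k ≥ 3 and c > 2/k, the equation ψ(x) = ck has a unique root λ(ck), which is positive.) -/
/-- `ψ(x) = x f'(x)/f(x) = x(e^x − 1)/(e^x − 1 − x)` for `x ≠ 0`, with `ψ(0) = 2`
(the continuous extension), where `f(x) = e^x − 1 − x`. -/
noncomputable def psi (x : ℝ) : ℝ :=
  if x = 0 then 2 else x * (Real.exp x - 1) / (Real.exp x - 1 - x)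

lemma f_pos {x : ℝ} (hx : x ≠ 0) : 0 < Real.exp x - 1 - x := by
  have := Real.add_one_lt_exp hx
  linarith

/-- `p(y) = (2−y)e^y − y − 2 > 0` for `y < 0`. -/
lemma p_pos {y : ℝ} (hy : y < 0) : 0 < (2 - y) * Real.exp y - y - 2 := by
  set p : ℝ → ℝ := fun y => (2 - y) * Real.exp y - y - 2 with hp
  set p1 : ℝ → ℝ := fun y => (1 - y) * Real.exp y - 1 with hp1
  have hderiv : ∀ x : ℝ, HasDerivAt p (p1 x) x := by
    intro x
    have h1 : HasDerivAt (fun x : ℝ => (2 - x) * Real.exp x)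
        ((-1) * Real.exp x + (2 - x) * Real.exp x) x :=
      (HasDerivAt.const_sub 2 (hasDerivAt_id x)).mul (Real.hasDerivAt_exp x)
    have := (h1.sub (hasDerivAt_id x)).sub_const 2
    refine this.congr_deriv ?_
    simp [hp1]; ring
  have hderiv1 : ∀ x : ℝ, HasDerivAt p1 (-x * Real.exp x) x := by
    intro x
    have h1 : HasDerivAt (fun x : ℝ => (1 - x) * Real.exp x)
        ((-1) * Real.exp x + (1 - x) * Real.exp x) x :=
      (HasDerivAt.const_sub 1 (hasDerivAt_id x)).mul (Real.hasDerivAt_exp x)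
    have := h1.sub_const 1
    refine this.congr_deriv ?_
    ring
  -- p1 is strictly monotone on Iic 0
  have hp1mono : StrictMonoOn p1 (Set.Iic (0:ℝ)) := by
    apply strictMonoOn_of_deriv_pos (convex_Iic 0)
    · exact (Continuous.continuousOn (by continuity))
    · intro x hx
      rw [interior_Iic] at hx
      rw [(hderiv1 x).deriv]
      have : 0 < Real.exp x := Real.exp_pos x
      nlinarith [hx.out]
  have hp1neg : p1 y < 0 := by
    have := hp1mono (le_of_lt hy) (le_refl (0:ℝ)) hy
    simpa [hp1] using this
  -- p is strictly antitone on Iic 0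
  have hpanti : StrictAntiOn p (Set.Iic (0:ℝ)) := by
    apply strictAntiOn_of_deriv_neg (convex_Iic 0)
    · exact (Continuous.continuousOn (by continuity))
    · intro x hx
      rw [interior_Iic] at hx
      rw [(hderiv x).deriv]
      have := hp1mono (le_of_lt hx.out) (le_refl (0:ℝ)) hx.out
      simpa [hp1] using this
  have := hpanti (le_of_lt hy) (le_refl (0:ℝ)) hy
  simpa [hp] using this

lemma psi_lt_two_of_neg {y : ℝ} (hy : y < 0) : psi y < 2 := by
  have hy0 : y ≠ 0 := ne_of_lt hy
  have hf : 0 < Real.exp y - 1 - y := f_pos hy0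
  have hp := p_pos hy
  rw [psi, if_neg hy0, div_lt_iff₀ hf]
  nlinarith

/-- For every real `t > 2` there is exactly one real `x` with `ψ(x) = t`,
and this `x` is positive. -/
theorem psi_unique_positive_root (t : ℝ) (ht : 2 < t) :
    ∃ x : ℝ, 0 < x ∧ psi x = t ∧ ∀ y : ℝ, psi y = t → y = x := by
  set h : ℝ → ℝ := fun x => t * (Real.exp x - 1 - x) - x * (Real.exp x - 1) with hh
  set h1 : ℝ → ℝ := fun x => t * (Real.exp x - 1) - (Real.exp x - 1) - x * Real.exp x with hh1
  have hderiv : ∀ x : ℝ, HasDerivAt h (h1 x) x := by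
    intro x
    have e1 : HasDerivAt (fun x : ℝ => t * (Real.exp x - 1 - x)) (t * (Real.exp x - 1)) x := by
      have := (((Real.hasDerivAt_exp x).sub_const 1).sub (hasDerivAt_id x)).const_mul t
      simpa using this
    have e2 : HasDerivAt (fun x : ℝ => x * (Real.exp x - 1))
        (1 * (Real.exp x - 1) + x * Real.exp x) x :=
      (hasDerivAt_id x).mul ((Real.hasDerivAt_exp x).sub_const 1)
    have := e1.sub e2
    refine this.congr_deriv ?_
    simp [hh1]; ring
  have hderiv1 : ∀ x : ℝ, HasDerivAt h1 (Real.exp x * (t - 2 - x)) x := by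
    intro x
    have e1 : HasDerivAt (fun x : ℝ => t * (Real.exp x - 1)) (t * Real.exp x) x := by
      have := ((Real.hasDerivAt_exp x).sub_const 1).const_mul t
      simpa using this
    have e2 : HasDerivAt (fun x : ℝ => x * Real.exp x)
        (1 * Real.exp x + x * Real.exp x) x := (hasDerivAt_id x).mul (Real.hasDerivAt_exp x)
    have := (e1.sub ((Real.hasDerivAt_exp x).sub_const 1)).sub e2
    refine this.congr_deriv ?_
    ring
  have hcont : Continuous h := by continuity
  have hderiv_eq : deriv h = h1 := funext fun x => (hderiv x).deriv
  -- h1 strictly monotone on Icc 0 (t-2)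
  have hmono1 : StrictMonoOn h1 (Set.Icc (0:ℝ) (t - 2)) := by
    apply strictMonoOn_of_deriv_pos (convex_Icc 0 (t-2))
    · exact Continuous.continuousOn (by continuity)
    · intro x hx
      rw [interior_Icc] at hx
      rw [(hderiv1 x).deriv]
      have := Real.exp_pos x
      nlinarith [hx.1, hx.2]
  have h1zero : h1 0 = 0 := by simp [hh1]
  have h1pos : ∀ x ∈ Set.Ioc (0:ℝ) (t - 2), 0 < h1 x := by
    intro x hx
    have := hmono1 (Set.left_mem_Icc.2 (by linarith)) ⟨le_of_lt hx.1, hx.2⟩ hx.1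
    rwa [h1zero] at this
  -- h strictly monotone on Icc 0 (t-2)
  have hmono : StrictMonoOn h (Set.Icc (0:ℝ) (t - 2)) := by
    apply strictMonoOn_of_deriv_pos (convex_Icc 0 (t-2)) hcont.continuousOn
    intro x hx
    rw [interior_Icc] at hx
    rw [(hderiv x).deriv]
    exact h1pos x ⟨hx.1, le_of_lt hx.2⟩
  have hzero : h 0 = 0 := by simp [hh]
  have hpos : ∀ x ∈ Set.Ioc (0:ℝ) (t - 2), 0 < h x := by
    intro x hx
    have := hmono (Set.left_mem_Icc.2 (by linarith)) ⟨le_of_lt hx.1, hx.2⟩ hx.1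
    rwa [hzero] at this
  have hposT : 0 < h (t - 2) := hpos _ ⟨by linarith, le_refl _⟩
  -- h (t+1) < 0
  have hnegT : h (t + 1) < 0 := by
    have := Real.exp_pos (t + 1)
    have h2 : 1 < Real.exp (t + 1) := by
      have : (0:ℝ) < t + 1 := by linarith
      calc (1:ℝ) < 1 + (t+1) := by linarith
        _ < Real.exp (t+1) := by
            have := Real.add_one_lt_exp (ne_of_gt this); linarith
    simp only [hh]
    nlinarith
  -- existence of a zero in Ioo (t-2) (t+1)
  obtain ⟨x, hxmem, hx0⟩ : ∃ x ∈ Set.Ioo (t - 2) (t + 1), h x = 0 := by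
    have hsub := intermediate_value_Ioo' (a := t - 2) (b := t + 1) (by linarith)
      hcont.continuousOn (f := h)
    have : (0:ℝ) ∈ Set.Ioo (h (t+1)) (h (t-2)) := ⟨hnegT, hposT⟩
    obtain ⟨x, hx, hx0⟩ := hsub this
    exact ⟨x, hx, hx0⟩
  have hxpos : 0 < x := by have := hxmem.1; linarith
  -- concavity on Ici (t-2)
  have hconc : StrictConcaveOn ℝ (Set.Ici (t - 2)) h := by
    apply strictConcaveOn_of_deriv2_neg (convex_Ici _) hcont.continuousOn
    intro z hz
    rw [interior_Ici] at hz
    have : deriv^[2] h z = Real.exp z * (t - 2 - z) := by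
      simp only [Function.iterate_succ, Function.iterate_zero, Function.comp_apply, id_eq]
      rw [hderiv_eq, (hderiv1 z).deriv]
    rw [this]
    have := Real.exp_pos z
    nlinarith [hz.out]
  -- uniqueness of zeros of h in Ioi (t-2)
  have huniq : ∀ a b : ℝ, t - 2 < a → t - 2 < b → h a = 0 → h b = 0 → a = b := by
    have key : ∀ a b : ℝ, t - 2 < a → a < b → h a = 0 → h b = 0 → False := by
      intro a b ha hab ha0 hb0
      set lam := (b - a) / (b - (t - 2)) with hlam
      set mu := (a - (t - 2)) / (b - (t - 2)) with hmu
      have hd : 0 < b - (t - 2) := by linarith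
      have hlampos : 0 < lam := div_pos (by linarith) hd
      have hmupos : 0 < mu := div_pos (by linarith) hd
      have hsum : lam + mu = 1 := by rw [hlam, hmu, ← add_div, div_eq_one_iff_eq (ne_of_gt hd)]; ring
      have hcomb : lam • (t - 2) + mu • b = a := by
        simp only [smul_eq_mul, hlam, hmu]; field_simp; ring
      have := hconc.2 (Set.self_mem_Ici) (Set.mem_Ici.2 (by linarith : t - 2 ≤ b))
        (by intro hEq; linarith) hlampos hmupos hsum
      rw [hcomb, ha0, hb0] at this
      simp only [smul_eq_mul, mul_zero, add_zero] at this
      nlinarith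
    intro a b ha hb ha0 hb0
    rcases lt_trichotomy a b with hlt | heq | hgt
    · exact (key a b ha hlt ha0 hb0).elim
    · exact heq
    · exact (key b a hb hgt hb0 ha0).elim
  -- psi x = t
  have hpsix : psi x = t := by
    have hx0' : x ≠ 0 := ne_of_gt hxpos
    have hf := f_pos hx0'
    rw [psi, if_neg hx0', div_eq_iff (ne_of_gt hf)]
    simp only [hh] at hx0
    linarith
  refine ⟨x, hxpos, hpsix, ?_⟩
  intro y hy
  rcases lt_trichotomy y 0 with hylt | hyeq | hygt
  · exact absurd hy (by have := psi_lt_two_of_neg hylt; linarith)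
  · exact absurd hy (by rw [hyeq]; simp [psi]; linarith)
  · -- y > 0, so h y = 0
    have hy0' : y ≠ 0 := ne_of_gt hygt
    have hf := f_pos hy0'
    have hhy : h y = 0 := by
      rw [psi, if_neg hy0', div_eq_iff (ne_of_gt hf)] at hy
      simp only [hh]; linarith
    have hygtT : t - 2 < y := by
      by_contra hle
      push_neg at hle
      have := hpos y ⟨hygt, hle⟩
      linarith
    exact huniq y x hygtT hxmem.1 hhy hx0
end

section
/- Fix an integer k ≥ 4 and a real c ∈ (2/k, 1). Then for all α ∈ (0.2743, 1/2], taking ζ₁ = α and ζ₂ = 1 − α yields H_k(α,(ζ₁,ζ₂);c) ≤ −min{0.59·(1−c), 0.0011}; in particular there exists ε = ε(c,k) > 0 with H_k(α,(ζ₁,ζ₂);c) < −ε for all such α, and ζ₂ ≥ 1/2. -/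
/-- `f(x) = e^x − 1 − x`. -/
noncomputable def fE (x : ℝ) : ℝ := Real.exp x - 1 - x

/-- The entropy function `H(α) = −α ln α − (1−α) ln(1−α)`; since `Real.log 0 = 0`
in Mathlib, the convention `x ln x = 0` at `x = 0` holds automatically. -/
noncomputable def Hent (a : ℝ) : ℝ := -a * Real.log a - (1 - a) * Real.log (1 - a)

/-- `H_k(α,(ζ₁,ζ₂);c)` with `λ = λ(ck)` passed as the argument `lam`:
`cH(α) + ckα ln(α/ζ₁) + ck(1−α) ln((1−α)/ζ₂) + ln[(f(λ(ζ₂+ζ₁)) + f(λ(ζ₂−ζ₁)))/(2f(λ))]`. -/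
noncomputable def Hk (k : ℕ) (c a ζ₁ ζ₂ lam : ℝ) : ℝ :=
  c * Hent a + c * k * a * Real.log (a / ζ₁) + c * k * (1 - a) * Real.log ((1 - a) / ζ₂)
    + Real.log ((fE (lam * (ζ₂ + ζ₁)) + fE (lam * (ζ₂ - ζ₁))) / (2 * fE lam))

/-- `α_k = e·k^{−k/(k−2)}`. -/
noncomputable def alphaK (k : ℕ) : ℝ :=
  Real.exp 1 * (k : ℝ) ^ (-(k : ℝ) / ((k : ℝ) - 2))

lemma hasDerivAt_fE (x : ℝ) : HasDerivAt fE (Real.exp x - 1) x := by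
  have h := ((Real.hasDerivAt_exp x).sub_const 1).sub (hasDerivAt_id x)
  have he : fE = fun x => Real.exp x - 1 - x := rfl
  rw [he]; exact h
lemma fE_zero : fE 0 = 0 := by simp [fE]
lemma fE_nonneg (x : ℝ) : 0 ≤ fE x := by
  have := Real.add_one_le_exp x; simp only [fE]; linarith
lemma fE_quad {x : ℝ} (hx : 0 ≤ x) : x^2/2 ≤ fE x := by
  have := Real.quadratic_le_exp_of_nonneg hx; simp only [fE]; linarith
lemma fE_pos {x : ℝ} (hx : 0 < x) : 0 < fE x :=
  lt_of_lt_of_le (by positivity) (fE_quad hx.le)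
lemma fE_mono {x y : ℝ} (hx : 0 ≤ x) (hxy : x ≤ y) : fE x ≤ fE y := by
  have h1 : Real.exp x * ((y - x) + 1) ≤ Real.exp x * Real.exp (y - x) :=
    mul_le_mul_of_nonneg_left (Real.add_one_le_exp (y - x)) (Real.exp_pos x).le
  rw [← Real.exp_add] at h1
  have h3 : x + (y - x) = y := by ring
  rw [h3] at h1
  have h2 : (1:ℝ) ≤ Real.exp x := Real.one_le_exp hx
  simp only [fE]
  nlinarith

lemma cube_le_exp {x : ℝ} (hx : 0 ≤ x) : 1 + x + x^2/2 + x^3/6 ≤ Real.exp x := by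
  have h := Real.sum_le_exp_of_nonneg hx 4
  norm_num [Finset.sum_range_succ, Nat.factorial] at h; linarith
lemma mono_of_hasDeriv {S : Set ℝ} (hS : Convex ℝ S) {f f' : ℝ → ℝ}
    (hf : ∀ x ∈ S, HasDerivAt f (f' x) x)
    (hd : ∀ x ∈ interior S, 0 ≤ f' x) : MonotoneOn f S :=
  monotoneOn_of_deriv_nonneg hS
    (fun x hx => (hf x hx).continuousAt.continuousWithinAt)
    (fun x hx => ((hf x (interior_subset hx)).differentiableAt).differentiableWithinAt)
    (fun x hx => by rw [(hf x (interior_subset hx)).deriv]; exact hd x hx)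
lemma anti_of_hasDeriv {S : Set ℝ} (hS : Convex ℝ S) {f f' : ℝ → ℝ}
    (hf : ∀ x ∈ S, HasDerivAt f (f' x) x)
    (hd : ∀ x ∈ interior S, f' x ≤ 0) : AntitoneOn f S :=
  antitoneOn_of_deriv_nonpos hS
    (fun x hx => (hf x hx).continuousAt.continuousWithinAt)
    (fun x hx => ((hf x (interior_subset hx)).differentiableAt).differentiableWithinAt)
    (fun x hx => by rw [(hf x (interior_subset hx)).deriv]; exact hd x hx)

-- chunk 2
lemma exp_line {β t : ℝ} (hβ0 : 0 ≤ β) (hβ1 : β ≤ 1) (ht : 0 ≤ t) :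
    Real.exp (β * t) - 1 ≤ β * (Real.exp t - 1) := by
  have hmono : MonotoneOn (fun t => β * (Real.exp t - 1) - (Real.exp (β * t) - 1)) (Set.Ici 0) := by
    apply mono_of_hasDeriv (convex_Ici 0)
      (f' := fun t => β * Real.exp t - Real.exp (β * t) * β)
    · intro t _
      have hin : HasDerivAt (fun t : ℝ => β * t) β t := by
        simpa using (hasDerivAt_id t).const_mul β
      have h1 : HasDerivAt (fun t : ℝ => Real.exp (β * t)) (Real.exp (β * t) * β) t := by
        exact (Real.hasDerivAt_exp (β * t)).comp t hin
      exact (((Real.hasDerivAt_exp t).sub_const 1).const_mul β).sub (h1.sub_const 1)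
    · intro t ht'
      rw [interior_Ici] at ht'
      have hle : Real.exp (β * t) ≤ Real.exp t := by
        apply Real.exp_le_exp.2; nlinarith [le_of_lt (Set.mem_Ioi.1 ht')]
      nlinarith
  have h0 : (0:ℝ) ∈ Set.Ici (0:ℝ) := Set.self_mem_Ici
  have := hmono h0 (Set.mem_Ici.2 ht) ht
  simp at this
  linarith

lemma fE_scale {β x : ℝ} (hβ0 : 0 ≤ β) (hβ1 : β ≤ 1) (hx : 0 ≤ x) :
    fE (β * x) ≤ β^2 * fE x := by
  have hmono : MonotoneOn (fun x => β^2 * fE x - fE (β * x)) (Set.Ici 0) := by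
    apply mono_of_hasDeriv (convex_Ici 0)
      (f' := fun x => β^2 * (Real.exp x - 1) - (Real.exp (β * x) - 1) * β)
    · intro t _
      have hin : HasDerivAt (fun t : ℝ => β * t) β t := by
        simpa using (hasDerivAt_id t).const_mul β
      have h1 : HasDerivAt (fun t : ℝ => fE (β * t)) ((Real.exp (β * t) - 1) * β) t := by
        exact (hasDerivAt_fE (β * t)).comp t hin
      exact ((hasDerivAt_fE t).const_mul (β^2)).sub h1
    · intro t ht'
      rw [interior_Ici] at ht'
      have := exp_line hβ0 hβ1 (le_of_lt ht')
      nlinarith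
  have := hmono Set.self_mem_Ici (Set.mem_Ici.2 hx) hx
  simp [fE_zero] at this
  linarith

lemma T_id {x : ℝ} (hx : 0 < x) : x + x^2 / fE x = x * (Real.exp x - 1) / fE x := by
  have h := (fE_pos hx).ne'
  field_simp
  simp only [fE]
  ring

lemma T_mono : MonotoneOn (fun x : ℝ => x + x^2 / fE x) (Set.Ioi 0) := by
  apply mono_of_hasDeriv (convex_Ioi 0)
    (f' := fun x => 1 + ((2*x) * fE x - x^2 * (Real.exp x - 1)) / (fE x)^2)
  · intro x hx
    have hxp : (0:ℝ) < x := hx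
    have hf := fE_pos hxp
    have hp : HasDerivAt (fun x : ℝ => x^2) (2*x) x := by
      simpa using hasDerivAt_pow 2 x
    exact (hasDerivAt_id x).add (hp.div (hasDerivAt_fE x) hf.ne')
  · intro x hx
    rw [interior_Ioi] at hx
    have hxp : (0:ℝ) < x := hx
    have hf := fE_pos hxp
    have hcube : x^2/2 + x^3/6 ≤ fE x := by
      have := cube_le_exp hxp.le; simp only [fE]; linarith
    have hnum : 0 ≤ (fE x)^2 + ((2*x) * fE x - x^2 * (Real.exp x - 1)) := by
      have hex : Real.exp x - 1 = fE x + x := by simp only [fE]; ring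
      rw [hex]
      have hs : 0 ≤ fE x - x^2/2 - x^3/6 := by linarith
      nlinarith [sq_nonneg (fE x - x^2/2 - x^3/6), mul_nonneg hs hxp.le,
        mul_nonneg hs (pow_nonneg hxp.le 3), pow_nonneg hxp.le 4, pow_nonneg hxp.le 6]
    have heq : 1 + ((2*x) * fE x - x^2 * (Real.exp x - 1)) / (fE x)^2
        = ((fE x)^2 + ((2*x) * fE x - x^2 * (Real.exp x - 1))) / (fE x)^2 := by
      field_simp
    rw [heq]
    exact div_nonneg hnum (sq_nonneg _)

-- chunk 3
lemma ratio_anti {β l0 l : ℝ} (hβ0 : 0 ≤ β) (hβ1 : β ≤ 1) (h0 : 0 < l0) (hl : l0 ≤ l) :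
    fE (β * l) / fE l ≤ fE (β * l0) / fE l0 := by
  rcases eq_or_lt_of_le hβ0 with hβ | hβp
  · rw [← hβ]
    norm_num [fE]
  · have hFanti : AntitoneOn (fun t => fE (β * t) / fE t) (Set.Ici l0) := by
      apply anti_of_hasDeriv (convex_Ici l0)
        (f' := fun t => ((Real.exp (β * t) - 1) * β * fE t - fE (β * t) * (Real.exp t - 1)) / (fE t)^2)
      · intro t ht
        have htp : 0 < t := lt_of_lt_of_le h0 ht
        have hin : HasDerivAt (fun t : ℝ => β * t) β t := by
          simpa using (hasDerivAt_id t).const_mul β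
        have hnum : HasDerivAt (fun t : ℝ => fE (β * t)) ((Real.exp (β * t) - 1) * β) t := by
          exact (hasDerivAt_fE (β * t)).comp t hin
        exact hnum.div (hasDerivAt_fE t) (fE_pos htp).ne'
      · intro t ht
        rw [interior_Ici] at ht
        have htp : 0 < t := lt_trans h0 ht
        have hbt : 0 < β * t := mul_pos hβp htp
        have hT := T_mono (Set.mem_Ioi.2 hbt) (Set.mem_Ioi.2 htp) (by nlinarith : β * t ≤ t)
        simp only at hT
        rw [T_id hbt, T_id htp, div_le_div_iff₀ (fE_pos hbt) (fE_pos htp)] at hT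
        apply div_nonpos_of_nonpos_of_nonneg _ (sq_nonneg _)
        nlinarith [hT, htp]
    have := hFanti Set.self_mem_Ici (Set.mem_Ici.2 hl) hl
    simpa using this

-- chunk 4
lemma log_ratio {s : ℝ} (h0 : 0 ≤ s) (h1 : s < 1) :
    2*s ≤ Real.log (1+s) - Real.log (1-s) := by
  rcases eq_or_lt_of_le h0 with h | h0p
  · rw [← h]; norm_num
  · have hmono : MonotoneOn (fun u => Real.log (1+u) - Real.log (1-u) - 2*u) (Set.Icc 0 s) := by
      apply mono_of_hasDeriv (convex_Icc 0 s)
        (f' := fun u => 1/(1+u) - (-1)/(1-u) - 2)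
      · intro u hu
        have hp : (0:ℝ) < 1 + u := by linarith [hu.1]
        have hm : (0:ℝ) < 1 - u := by linarith [hu.2, h1]
        have d1 : HasDerivAt (fun u : ℝ => Real.log (1+u)) (1/(1+u)) u := by
          have := (((hasDerivAt_id u).const_add 1)).log hp.ne'
          simpa using this
        have d2 : HasDerivAt (fun u : ℝ => Real.log (1-u)) ((-1)/(1-u)) u := by
          have := (((hasDerivAt_id u).const_sub 1)).log hm.ne'
          simpa using this
        have d3 : HasDerivAt (fun u : ℝ => 2*u) 2 u := by
          simpa using (hasDerivAt_id u).const_mul (2:ℝ)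
        exact (d1.sub d2).sub d3
      · intro u hu
        rw [interior_Icc] at hu
        have hp : (0:ℝ) < 1 + u := by linarith [hu.1]
        have hm : (0:ℝ) < 1 - u := by linarith [hu.2, h1]
        have key : 1/(1+u) - (-1)/(1-u) - 2 = 2*u^2/((1+u)*(1-u)) := by
          field_simp; ring
        rw [key]
        positivity
    have h2 := hmono (Set.left_mem_Icc.2 h0) (Set.right_mem_Icc.2 h0) h0
    norm_num at h2
    linarith

lemma g_lower {β : ℝ} (h0 : 0 ≤ β) (h1 : β < 1) :
    β^2 ≤ (1-β) * Real.log (1-β) + (1+β) * Real.log (1+β) := by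
  rcases eq_or_lt_of_le h0 with h | h0p
  · rw [← h]; norm_num
  · have hmono : MonotoneOn
        (fun u => (1-u) * Real.log (1-u) + (1+u) * Real.log (1+u) - u^2) (Set.Icc 0 β) := by
      apply mono_of_hasDeriv (convex_Icc 0 β)
        (f' := fun u => Real.log (1+u) - Real.log (1-u) - 2*u)
      · intro u hu
        have hp : (0:ℝ) < 1 + u := by linarith [hu.1]
        have hm : (0:ℝ) < 1 - u := by linarith [hu.2, h1]
        have d1 : HasDerivAt (fun u : ℝ => 1 - u) (-1) u := by
          simpa using (hasDerivAt_id u).const_sub 1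
        have d2 : HasDerivAt (fun u : ℝ => 1 + u) (1:ℝ) u := by
          simpa using (hasDerivAt_id u).const_add 1
        have dl1 : HasDerivAt (fun u : ℝ => Real.log (1-u)) ((-1)/(1-u)) u := by
          simpa using d1.log hm.ne'
        have dl2 : HasDerivAt (fun u : ℝ => Real.log (1+u)) (1/(1+u)) u := by
          simpa using d2.log hp.ne'
        have dp : HasDerivAt (fun u : ℝ => u^2) (2*u) u := by
          simpa using hasDerivAt_pow 2 u
        have H := ((d1.mul dl1).add (d2.mul dl2)).sub dp
        convert (show HasDerivAt (fun u => (1-u) * Real.log (1-u) + (1+u) * Real.log (1+u) - u^2) _ u from H) using 1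
        field_simp
        ring
      · intro u hu
        rw [interior_Icc] at hu
        have := log_ratio hu.1.le (lt_trans hu.2 h1)
        linarith
    have h2 := hmono (Set.left_mem_Icc.2 h0) (Set.right_mem_Icc.2 h0) h0
    norm_num at h2
    linarith

lemma Hent_nonneg {a : ℝ} (h0 : 0 < a) (h1 : a < 1) : 0 ≤ Hent a := by
  unfold Hent
  have l1 : Real.log a ≤ 0 := Real.log_nonpos h0.le h1.le
  have l2 : Real.log (1-a) ≤ 0 := Real.log_nonpos (by linarith) (by linarith)
  nlinarith

lemma ent_sq {a : ℝ} (h0 : 0 < a) (h1 : a ≤ 1/2) :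
    Hent a ≤ Real.log 2 - (1 - 2*a)^2 / 2 := by
  have hg := g_lower (β := 1 - 2*a) (by linarith) (by linarith)
  have e1 : (1 : ℝ) - (1 - 2*a) = 2*a := by ring
  have e2 : (1 : ℝ) + (1 - 2*a) = 2*(1-a) := by ring
  rw [e1, e2, Real.log_mul two_ne_zero h0.ne',
    Real.log_mul two_ne_zero (by linarith : (1:ℝ)-a ≠ 0)] at hg
  unfold Hent
  nlinarith [hg]

-- chunk 5: numerics
lemma exp_half_lo : (1.6487:ℝ) ≤ Real.exp (1/2) := by
  have h : Real.exp (1/2) * Real.exp (1/2) = Real.exp 1 := by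
    rw [← Real.exp_add]; norm_num
  nlinarith [Real.exp_pos (1/2), Real.exp_one_gt_d9]

lemma fE25_lo : (8.68:ℝ) ≤ fE 2.5 := by
  have h : Real.exp 2.5 = Real.exp 1 * Real.exp 1 * Real.exp (1/2) := by
    rw [← Real.exp_add, ← Real.exp_add]; norm_num
  have h1 := Real.exp_one_gt_d9.le
  have h2 := exp_half_lo
  have key : (12.18:ℝ) ≤ Real.exp 2.5 := by
    rw [h]
    calc (12.18:ℝ) ≤ 2.7182818283 * 2.7182818283 * 1.6487 := by norm_num
    _ ≤ Real.exp 1 * Real.exp 1 * Real.exp (1/2) := by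
        gcongr <;> norm_num
  simp only [fE]; linarith

lemma fE3_lo : (16.08:ℝ) ≤ fE 3 := by
  have h : Real.exp 3 = Real.exp 1 * Real.exp 1 * Real.exp 1 := by
    rw [← Real.exp_add, ← Real.exp_add]; norm_num
  have h1 := Real.exp_one_gt_d9.le
  have key : (20.08:ℝ) ≤ Real.exp 3 := by
    rw [h]
    calc (20.08:ℝ) ≤ 2.7182818283 * 2.7182818283 * 2.7182818283 := by norm_num
    _ ≤ Real.exp 1 * Real.exp 1 * Real.exp 1 := by gcongr <;> norm_num
  simp only [fE]; linarith

lemma fE35_lo : (28.61:ℝ) ≤ fE 3.5 := by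
  have h : Real.exp 3.5 = Real.exp 1 * Real.exp 1 * Real.exp 1 * Real.exp (1/2) := by
    rw [← Real.exp_add, ← Real.exp_add, ← Real.exp_add]; norm_num
  have h1 := Real.exp_one_gt_d9.le
  have h2 := exp_half_lo
  have key : (33.11:ℝ) ≤ Real.exp 3.5 := by
    rw [h]
    calc (33.11:ℝ) ≤ 2.7182818283 * 2.7182818283 * 2.7182818283 * 1.6487 := by norm_num
    _ ≤ Real.exp 1 * Real.exp 1 * Real.exp 1 * Real.exp (1/2) := by gcongr <;> norm_num
  simp only [fE]; linarith

lemma exp_013_up : Real.exp 0.13 ≤ 1.1388285 := by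
  have h := Real.exp_bound' (x := 0.13) (by norm_num) (by norm_num) (n := 5) (by norm_num)
  norm_num [Finset.sum_range_succ, Nat.factorial] at h
  linarith

lemma exp_036_up : Real.exp 0.36 ≤ 1.4333298 := by
  have h := Real.exp_bound' (x := 0.36) (by norm_num) (by norm_num) (n := 6) (by norm_num)
  norm_num [Finset.sum_range_succ, Nat.factorial] at h
  linarith

lemma exp_058_up : Real.exp 0.58 ≤ 1.7860388 := by
  have h := Real.exp_bound' (x := 0.58) (by norm_num) (by norm_num) (n := 7) (by norm_num)
  norm_num [Finset.sum_range_succ, Nat.factorial] at h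
  linarith

lemma fE113_up : fE 1.13 ≤ 0.966 := by
  have h : Real.exp 1.13 = Real.exp 1 * Real.exp 0.13 := by
    rw [← Real.exp_add]; norm_num
  have key : Real.exp 1.13 ≤ 3.096 := by
    rw [h]
    calc Real.exp 1 * Real.exp 0.13 ≤ 2.7182819 * 1.1388285 :=
      mul_le_mul (Real.exp_one_lt_d9.le.trans (by norm_num)) exp_013_up (Real.exp_pos _).le (by norm_num)
    _ ≤ 3.096 := by norm_num
  simp only [fE]; linarith

lemma fE136_up : fE 1.36 ≤ 1.537 := by
  have h : Real.exp 1.36 = Real.exp 1 * Real.exp 0.36 := by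
    rw [← Real.exp_add]; norm_num
  have key : Real.exp 1.36 ≤ 3.8963 := by
    rw [h]
    calc Real.exp 1 * Real.exp 0.36 ≤ 2.7182819 * 1.4333298 :=
      mul_le_mul (Real.exp_one_lt_d9.le.trans (by norm_num)) exp_036_up (Real.exp_pos _).le (by norm_num)
    _ ≤ 3.8963 := by norm_num
  simp only [fE]; linarith

lemma fE158_up : fE 1.58 ≤ 2.276 := by
  have h : Real.exp 1.58 = Real.exp 1 * Real.exp 0.58 := by
    rw [← Real.exp_add]; norm_num
  have key : Real.exp 1.58 ≤ 4.8553 := by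
    rw [h]
    calc Real.exp 1 * Real.exp 0.58 ≤ 2.7182819 * 1.7860388 :=
      mul_le_mul (Real.exp_one_lt_d9.le.trans (by norm_num)) exp_058_up (Real.exp_pos _).le (by norm_num)
    _ ≤ 4.8553 := by norm_num
  simp only [fE]; linarith


set_option maxHeartbeats 2000000 in
/-- Claim (large α): for `k ≥ 4` and `c ∈ (2/k, 1)`, with `λ = λ(ck)`, for all
`α ∈ (0.2743, 1/2]`, taking `ζ₁ = α`, `ζ₂ = 1 − α` yields
`H_k(α,ζ;c) ≤ −min{0.59(1−c), 0.0011}` (in particular `H_k < −ε` for some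
`ε = ε(c,k) > 0`), and `ζ₂ = 1 − α ≥ 1/2`. -/
theorem Hk_claim_large_alpha (k : ℕ) (hk : 4 ≤ k) (c : ℝ)
    (hc1 : 2 / (k : ℝ) < c) (hc2 : c < 1)
    (lam : ℝ) (hlam : 0 < lam) (hpsi : psi lam = c * k) :
    ∀ a : ℝ, 0.2743 < a → a ≤ 1 / 2 →
      Hk k c a a (1 - a) lam ≤ -min (0.59 * (1 - c)) 0.0011 ∧ (1 / 2 : ℝ) ≤ 1 - a := by
  intro a ha1 ha2
  refine ⟨?_, by linarith⟩
  have ha0 : (0:ℝ) < a := lt_trans (by norm_num) ha1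
  have hk4 : (4:ℝ) ≤ (k:ℝ) := by exact_mod_cast hk
  have hc0 : 0 < c := lt_trans (by positivity) hc1
  have hfl : 0 < fE lam := fE_pos hlam
  have hb0 : 0 ≤ 1 - 2*a := by linarith
  have hb1 : 1 - 2*a ≤ 0.4514 := by linarith
  have hbl : 1 - 2*a ≤ 1 := by linarith
  set r : ℝ := fE (lam * (1 - 2*a)) / fE lam with hr
  have hr0 : 0 ≤ r := div_nonneg (fE_nonneg _) hfl.le
  clear_value r
  have hHk : Hk k c a a (1-a) lam = c * Hent a + (Real.log (1 + r) - Real.log 2) := by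
    unfold Hk
    rw [div_self ha0.ne', div_self (by linarith : (1:ℝ) - a ≠ 0), Real.log_one,
      show lam * ((1-a) + a) = lam by ring, show lam * ((1-a) - a) = lam * (1 - 2*a) by ring,
      show (fE lam + fE (lam * (1 - 2*a))) / (2 * fE lam) = (1 + r)/2 by
        rw [hr, show (2:ℝ) * fE lam = fE lam * 2 by ring, ← div_div, add_div,
          div_self hfl.ne'],
      Real.log_div (by linarith : (1:ℝ) + r ≠ 0) two_ne_zero]
    ring
  rw [hHk]
  have hM0 : 0 ≤ Hent a := Hent_nonneg ha0 (by linarith)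
  have hMq : Hent a ≤ Real.log 2 - (1 - 2*a)^2/2 := ent_sq ha0 ha2
  have hlog : Real.log (1 + r) ≤ r := by
    have := Real.log_le_sub_one_of_pos (by linarith : (0:ℝ) < 1 + r); linarith
  have hln2 := Real.log_two_gt_d9
  have hbsq : (1 - 2*a)^2 ≤ 0.20376196 := by nlinarith
  have hpsi' : lam * (Real.exp lam - 1) / fE lam = c * k := by
    rw [← hpsi]; unfold psi; rw [if_neg hlam.ne']; rfl
  have hT : lam + lam^2 / fE lam = c * k := by
    rw [← hpsi']
    field_simp
    simp only [fE]
    ring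
  have hlam_ge : ∀ l0 : ℝ, 0 < l0 → l0 + l0^2 / fE l0 < 4*c → l0 ≤ lam := by
    intro l0 hl0 hlt
    by_contra hcon
    push_neg at hcon
    have hmono := T_mono (Set.mem_Ioi.2 hlam) (Set.mem_Ioi.2 hl0) hcon.le
    simp only at hmono
    have h4 : 4*c ≤ c*(k:ℝ) := by nlinarith
    linarith [hT]
  have hrK : ∀ l0 z K : ℝ, 0 < l0 → l0 ≤ lam → l0 * 0.4514 ≤ z → 0 ≤ K →
      fE z ≤ K * 0.20376196 * fE l0 → r ≤ K * (1-2*a)^2 := by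
    intro l0 z K hl0 hll zge hK0 hnum
    have hA : r ≤ fE ((1-2*a) * l0) / fE l0 := by
      rw [hr, mul_comm lam (1-2*a)]
      exact ratio_anti hb0 hbl hl0 hll
    have he : (1-2*a) * l0 = ((1-2*a)/0.4514) * (l0 * 0.4514) := by ring
    have hsc : fE ((1-2*a) * l0) ≤ ((1-2*a)/0.4514)^2 * fE (l0 * 0.4514) := by
      rw [he]
      exact fE_scale (div_nonneg hb0 (by norm_num))
        (by rw [div_le_one (by norm_num)]; linarith)
        (mul_nonneg hl0.le (by norm_num))
    have hB : fE ((1-2*a) * l0) ≤ ((1-2*a)/0.4514)^2 * (K * 0.20376196 * fE l0) := by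
      calc fE ((1-2*a) * l0) ≤ ((1-2*a)/0.4514)^2 * fE (l0 * 0.4514) := hsc
      _ ≤ ((1-2*a)/0.4514)^2 * fE z :=
          mul_le_mul_of_nonneg_left (fE_mono (mul_nonneg hl0.le (by norm_num)) zge) (sq_nonneg _)
      _ ≤ ((1-2*a)/0.4514)^2 * (K * 0.20376196 * fE l0) :=
          mul_le_mul_of_nonneg_left hnum (sq_nonneg _)
    have hC : fE ((1-2*a) * l0) / fE l0 ≤ K * (1-2*a)^2 := by
      rw [div_le_iff₀ (fE_pos hl0)]
      calc fE ((1-2*a) * l0) ≤ ((1-2*a)/0.4514)^2 * (K * 0.20376196 * fE l0) := hB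
      _ = K * (1-2*a)^2 * fE l0 := by ring
    linarith [hA, hC]
  rcases le_or_gt c 0.82 with hc | hcA
  · -- R1 : c ≤ 0.82
    have hmin : min (0.59*(1-c)) 0.0011 ≤ 0.0011 := min_le_right _ _
    have hr1 : r ≤ (1-2*a)^2 := by
      rw [hr, div_le_iff₀ hfl, mul_comm lam (1 - 2*a)]
      exact fE_scale hb0 hbl hlam.le
    have hcM : c * Hent a ≤ c * (Real.log 2 - (1 - 2*a)^2/2) :=
      mul_le_mul_of_nonneg_left hMq hc0.le
    have h1 : c * Hent a + (Real.log (1 + r) - Real.log 2) ≤ -0.0011 := by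
      nlinarith [mul_nonneg (by linarith : (0:ℝ) ≤ 0.82 - c)
        (by nlinarith : (0:ℝ) ≤ Real.log 2 - (1-2*a)^2/2)]
    linarith [h1, hmin]
  rcases le_or_gt c 0.9 with hc | hcB
  · -- R2 : 0.82 < c ≤ 0.9
    have hmin : min (0.59*(1-c)) 0.0011 ≤ 0.0011 := min_le_right _ _
    have hl25 : (2.5:ℝ) ≤ lam := by
      apply hlam_ge 2.5 (by norm_num)
      have hq : (2.5:ℝ)^2 / fE 2.5 ≤ 0.7201 := by
        rw [div_le_iff₀ (fE_pos (by norm_num))]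
        nlinarith [fE25_lo]
      nlinarith
    have hr2 : r ≤ 0.56 * (1-2*a)^2 := by
      apply hrK 2.5 1.13 0.56 (by norm_num) hl25 (by norm_num) (by norm_num)
      nlinarith [fE113_up, fE25_lo]
    have hcM : c * Hent a ≤ 0.9 * Hent a := mul_le_mul_of_nonneg_right hc hM0
    have h1 : c * Hent a + (Real.log (1 + r) - Real.log 2) ≤ -0.0011 := by
      linarith [hcM, hMq, hlog, hr2, hbsq, hln2.le]
    linarith [h1, hmin]
  rcases le_or_gt c 0.99 with hc | hcC
  · -- R3 : 0.9 < c ≤ 0.99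
    have hmin : min (0.59*(1-c)) 0.0011 ≤ 0.0011 := min_le_right _ _
    have hl3 : (3:ℝ) ≤ lam := by
      apply hlam_ge 3 (by norm_num)
      have hq : (3:ℝ)^2 / fE 3 ≤ 0.56 := by
        rw [div_le_iff₀ (fE_pos (by norm_num))]
        nlinarith [fE3_lo]
      nlinarith
    have hr3 : r ≤ 0.495 * (1-2*a)^2 := by
      apply hrK 3 1.36 0.495 (by norm_num) hl3 (by norm_num) (by norm_num)
      nlinarith [fE136_up, fE3_lo]
    have hcM : c * Hent a ≤ 0.99 * Hent a := mul_le_mul_of_nonneg_right hc hM0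
    have h1 : c * Hent a + (Real.log (1 + r) - Real.log 2) ≤ -0.0011 := by
      linarith [hcM, hMq, hlog, hr3, hbsq, hln2.le]
    linarith [h1, hmin]
  · -- R4 : 0.99 < c < 1
    have hmin : min (0.59*(1-c)) 0.0011 ≤ 0.59*(1-c) := min_le_left _ _
    have hl35 : (3.5:ℝ) ≤ lam := by
      apply hlam_ge 3.5 (by norm_num)
      have hq : (3.5:ℝ)^2 / fE 3.5 ≤ 0.429 := by
        rw [div_le_iff₀ (fE_pos (by norm_num))]
        nlinarith [fE35_lo]
      nlinarith
    have hr4 : r ≤ 0.49 * (1-2*a)^2 := by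
      apply hrK 3.5 1.58 0.49 (by norm_num) hl35 (by norm_num) (by norm_num)
      nlinarith [fE158_up, fE35_lo]
    by_cases hM59 : (0.59:ℝ) ≤ Hent a
    · have hfact : 0 ≤ (1-c) * (Hent a - 0.59) :=
        mul_nonneg (by linarith) (by linarith)
      have h1 : c * Hent a + (Real.log (1 + r) - Real.log 2) ≤ -(0.59*(1-c)) := by
        nlinarith [hfact, hMq, hlog, hr4, hbsq, hln2.le]
      linarith [h1, hmin]
    · push_neg at hM59
      have hfact : 0 ≤ (c - 0.99) * (0.59 - Hent a) :=
        mul_nonneg (by linarith) (by linarith)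
      have h1 : c * Hent a + (Real.log (1 + r) - Real.log 2) ≤ -(0.59*(1-c)) := by
        nlinarith [hfact, hMq, hlog, hr4, hbsq, hln2.le]
      linarith [h1, hmin]
end
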